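/- Let z ∈ (0, 1) and take the five-point scheme with the fourth-order Strang parameters σ = z(1 − z²)/6 and τ = −z²(1 − z²)/24. Let Φ : ℤ → ℝ be square-summable over j ≤ 0 and satisfy the type-2 second-order extrapolation conditions (ΔΦ)₀ = 0 and (Δ²Φ)₀ = 0 (these determine the ghost values Φ₁ and Φ₂). Define Ψ_j := (A(z)Φ)_j for j ≤ 0. Then ∑_{j ≤ −1} Ψ_j² + (1/2)·Ψ₀² ≤ ∑_{j ≤ −1} Φ_j² + (1/2)·Φ₀²; that is, the fourth-order Strang scheme with this boundary closure is semi-bounded for the weighted norm with weight 1/2 at j = 0. -/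

import Mathlib

/-- Backward difference `(DΦ)_j = Φ_j - Φ_{j-1}`. -/
noncomputable def Dd (Φ : ℤ → ℝ) (j : ℤ) : ℝ := Φ j - Φ (j - 1)

/-- Centered difference `(D₀Φ)_j = (Φ_{j+1} - Φ_{j-1})/2`. -/
noncomputable def D0 (Φ : ℤ → ℝ) (j : ℤ) : ℝ := (Φ (j + 1) - Φ (j - 1)) / 2

/-- Discrete Laplacian `(ΔΦ)_j = Φ_{j-1} - 2Φ_j + Φ_{j+1}`. -/
noncomputable def Lap (Φ : ℤ → ℝ) (j : ℤ) : ℝ := Φ (j - 1) - 2 * Φ j + Φ (j + 1)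

/-- `(DΔΦ)_j = (ΔΦ)_j - (ΔΦ)_{j-1}`. -/
noncomputable def DLap (Φ : ℤ → ℝ) (j : ℤ) : ℝ := Lap Φ j - Lap Φ (j - 1)

/-- `(D₀ΔΦ)_j = (-Φ_{j-2} + 2Φ_{j-1} - 2Φ_{j+1} + Φ_{j+2})/2`. -/
noncomputable def D0Lap (Φ : ℤ → ℝ) (j : ℤ) : ℝ :=
  (-Φ (j - 2) + 2 * Φ (j - 1) - 2 * Φ (j + 1) + Φ (j + 2)) / 2

/-- `(Δ²Φ)_j = Φ_{j-2} - 4Φ_{j-1} + 6Φ_j - 4Φ_{j+1} + Φ_{j+2}`. -/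
noncomputable def Lap2 (Φ : ℤ → ℝ) (j : ℤ) : ℝ :=
  Φ (j - 2) - 4 * Φ (j - 1) + 6 * Φ j - 4 * Φ (j + 1) + Φ (j + 2)

/-- The five point scheme `A(z)Φ = Φ - z D₀Φ + (z²/2) ΔΦ + σ D₀ΔΦ + τ Δ²Φ`. -/
noncomputable def A5 (z σ τ : ℝ) (Φ : ℤ → ℝ) (j : ℤ) : ℝ :=
  Φ j - z * D0 Φ j + z ^ 2 / 2 * Lap Φ j + σ * D0Lap Φ j + τ * Lap2 Φ j

/-!
Energy method. For `z² ≤ 1` the Strang scheme `Ψ = A(z)Φ` satisfies the local energy identity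
`Ψ_j² - Φ_j² = F_j - F_{j-1} - c₃ (DΔΦ)_j² - c₄ (Δ²Φ)_j²` with `c₃, c₄ ≥ 0`, the physical-space
form of its symbol identity `|â(ξ)|² = 1 - c₃ (2 sin (ξ/2))⁶ - c₄ (2 sin (ξ/2))⁸`; the flux `F_j`
is a quadratic form in `Φ_{j-1}, …, Φ_{j+2}`. Since `Φ ∈ ℓ²` the flux vanishes at `-∞`, and
summing over `j ≤ -1` gives `∑_{j ≤ -1} Ψ_j² ≤ ∑_{j ≤ -1} Φ_j² + F_{-1}`. The extrapolation
conditions make `Φ - Φ₀` odd about `j = 0` on the stencil, and then `½Ψ₀² - ½Φ₀² + F_{-1}` is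
`-z` times a sum of squares in `Φ₀`, `(DΦ)₀` and `(ΔΦ)_{-1}`.
-/

open Filter Topology Finset

theorem tsum_le_tsum_add_of_le_add_sub_succ {a b F : ℕ → ℝ} (ha : ∀ n, 0 ≤ a n)
    (hb : Summable b) (hF : Tendsto F atTop (𝓝 0)) (hab : ∀ n, a n ≤ b n + (F n - F (n + 1))) :
    ∑' n, a n ≤ ∑' n, b n + F 0 := by
  refine Real.tsum_le_of_sum_range_le ha fun N => ?_
  have hlim : Tendsto (fun M => ∑ n ∈ range M, b n + (F 0 - F M)) atTop
      (𝓝 (∑' n, b n + (F 0 - 0))) :=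
    hb.hasSum.tendsto_sum_nat.add (tendsto_const_nhds.sub hF)
  rw [sub_zero] at hlim
  refine ge_of_tendsto hlim (eventually_atTop.2 ⟨N, fun M hNM => ?_⟩)
  calc ∑ n ∈ range N, a n
      ≤ ∑ n ∈ range M, a n :=
        sum_le_sum_of_subset_of_nonneg (range_subset_range.2 hNM) fun n _ _ => ha n
    _ ≤ ∑ n ∈ range M, (b n + (F n - F (n + 1))) := sum_le_sum fun n _ => hab n
    _ = ∑ n ∈ range M, b n + (F 0 - F M) := by rw [sum_add_distrib, sum_range_sub']

theorem tendsto_atBot_zero_of_summable_Iic {G : Type*} [AddCommGroup G] [TopologicalSpace G]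
    [IsTopologicalAddGroup G] {f : ℤ → G} {c : ℤ}
    (hf : Summable fun j : {j : ℤ // j ≤ c} => f j) : Tendsto f atBot (𝓝 0) := by
  have hind : Tendsto ({j | j ≤ c}.indicator f) atBot (𝓝 0) :=
    (summable_subtype_iff_indicator.1 hf).tendsto_cofinite_zero.mono_left
      (Int.cofinite_eq ▸ le_sup_left)
  refine hind.congr' ((eventually_le_atBot c).mono fun j hj => ?_)
  exact Set.indicator_of_mem (show j ∈ {j : ℤ | j ≤ c} from hj) f

theorem tendsto_atBot_zero_of_summable_sq_Iic {Φ : ℤ → ℝ} {c : ℤ}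
    (hΦ : Summable fun j : {j : ℤ // j ≤ c} => Φ j ^ 2) : Tendsto Φ atBot (𝓝 0) := by
  have habs : Tendsto (fun j => |Φ j|) atBot (𝓝 0) := by
    simpa [Real.sqrt_sq_eq_abs] using
      (tendsto_atBot_zero_of_summable_Iic (f := fun j => Φ j ^ 2) hΦ).sqrt
  exact (tendsto_zero_iff_abs_tendsto_zero Φ).2 habs

def natEquivIicNegOne : ℕ ≃ {j : ℤ // j ≤ -1} where
  toFun n := ⟨-1 - n, by omega⟩
  invFun j := (-1 - j.1).toNat
  left_inv n := by simp
  right_inv j := Subtype.ext (by have := j.2; simp; omega)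

noncomputable abbrev strangScheme (z : ℝ) : (ℤ → ℝ) → ℤ → ℝ :=
  A5 z (z * (1 - z ^ 2) / 6) (-(z ^ 2 * (1 - z ^ 2)) / 24)

/-- The flux through the interface `j + 1/2`, as a quadratic form in the stencil values
`a, b, c, d = Φ_{j-1}, Φ_j, Φ_{j+1}, Φ_{j+2}`, written in their mean `m`, difference `δ`, mean
second difference `l` and third difference `t`. -/
noncomputable def strangFluxForm (z a b c d : ℝ) : ℝ :=
  let s := 1 - z ^ 2
  let m := (b + c) / 2
  let δ := c - b
  let l := (a - b - c + d) / 2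
  let t := -a + 3 * b - 3 * c + d
  z ^ 2 * m * δ - z * m ^ 2 + z * s / 3 * m * l - z ^ 2 * s / 12 * m * t
    - z * (4 * z ^ 2 - 1) / 12 * δ ^ 2 - z ^ 2 * s / 4 * δ * l - z * s ^ 2 / 12 * δ * t
    + z ^ 3 * s / 24 * l ^ 2 + z ^ 2 * s * (2 - z ^ 2) / 24 * l * t
    - z ^ 2 * s * (8 + 5 * z - 2 * z ^ 2 - 2 * z ^ 3) / 288 * t ^ 2

noncomputable def strangFlux (z : ℝ) (Φ : ℤ → ℝ) (j : ℤ) : ℝ :=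
  strangFluxForm z (Φ (j - 1)) (Φ j) (Φ (j + 1)) (Φ (j + 2))

noncomputable def strangDissipation (z : ℝ) (Φ : ℤ → ℝ) (j : ℤ) : ℝ :=
  z ^ 2 * (1 - z ^ 2) * (4 - z ^ 2) / 72 * DLap Φ j ^ 2
    + z ^ 2 * (1 - z ^ 2) ^ 2 * (4 - z ^ 2) / 576 * Lap2 Φ j ^ 2

theorem strangDissipation_nonneg {z : ℝ} (hz : z ^ 2 ≤ 1) (Φ : ℤ → ℝ) (j : ℤ) :
    0 ≤ strangDissipation z Φ j := by
  have hs : 0 ≤ 1 - z ^ 2 := by linarith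
  have h4 : 0 ≤ 4 - z ^ 2 := by linarith
  unfold strangDissipation
  positivity

theorem strangScheme_sq_sub_sq (z : ℝ) (Φ : ℤ → ℝ) (j : ℤ) :
    strangScheme z Φ j ^ 2 - Φ j ^ 2
      = strangFlux z Φ j - strangFlux z Φ (j - 1) - strangDissipation z Φ j := by
  have h₁ : j - 1 - 1 = j - 2 := by ring
  have h₂ : j - 1 + 1 = j := by ring
  have h₃ : j - 1 + 2 = j + 1 := by ring
  simp only [strangScheme, A5, D0, Lap, D0Lap, Lap2, DLap, strangFlux, strangFluxForm,
    strangDissipation, h₁, h₂, h₃]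
  ring

theorem tendsto_strangFlux_atBot (z : ℝ) {Φ : ℤ → ℝ} (hΦ : Tendsto Φ atBot (𝓝 0)) :
    Tendsto (strangFlux z Φ) atBot (𝓝 0) := by
  have hshift (k : ℤ) : Tendsto (fun j => Φ (j + k)) atBot (𝓝 0) :=
    hΦ.comp (tendsto_atBot_add_const_right _ k tendsto_id)
  have hpred : Tendsto (fun j => Φ (j - 1)) atBot (𝓝 0) := by
    simpa [sub_eq_add_neg] using hshift (-1)
  have hstencil : Tendsto (fun j => (Φ (j - 1), Φ j, Φ (j + 1), Φ (j + 2))) atBot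
      (𝓝 (0, 0, 0, 0)) :=
    hpred.prodMk_nhds (hΦ.prodMk_nhds ((hshift 1).prodMk_nhds (hshift 2)))
  have hcont : Continuous fun p : ℝ × ℝ × ℝ × ℝ => strangFluxForm z p.1 p.2.1 p.2.2.1 p.2.2.2 := by
    unfold strangFluxForm
    fun_prop
  have hzero : strangFluxForm z 0 0 0 0 = 0 := by simp [strangFluxForm]
  exact ((hcont.tendsto' (0, 0, 0, 0) 0 hzero).comp hstencil :)

theorem tsum_sq_strangScheme_le {z : ℝ} (hz : z ^ 2 ≤ 1) {Φ : ℤ → ℝ}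
    (hΦ : Summable fun j : {j : ℤ // j ≤ -1} => Φ j ^ 2) :
    ∑' j : {j : ℤ // j ≤ -1}, strangScheme z Φ j ^ 2
      ≤ ∑' j : {j : ℤ // j ≤ -1}, Φ j ^ 2 + strangFlux z Φ (-1) := by
  have hidx : Tendsto (fun n : ℕ => (-1 : ℤ) - n) atTop atBot :=
    tendsto_atBot_add_const_left _ (-1) (tendsto_neg_atTop_atBot.comp tendsto_natCast_atTop_atTop)
  have hflux := (tendsto_strangFlux_atBot z (tendsto_atBot_zero_of_summable_sq_Iic hΦ)).comp hidx
  rw [← natEquivIicNegOne.tsum_eq, ← natEquivIicNegOne.tsum_eq]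
  simpa using tsum_le_tsum_add_of_le_add_sub_succ (fun n => sq_nonneg _)
    (hΦ.comp_injective natEquivIicNegOne.injective) hflux fun n => by
      have henergy := strangScheme_sq_sub_sq z Φ (-1 - n)
      rw [show (-1 - n : ℤ) - 1 = -1 - ((n + 1 : ℕ) : ℤ) by push_cast; ring] at henergy
      have hdiss := strangDissipation_nonneg hz Φ (-1 - n)
      simp only [Function.comp_apply, natEquivIicNegOne, Equiv.coe_fn_mk]
      linarith

theorem strangScheme_boundary_energy_nonpos {z : ℝ} (hz : z ∈ Set.Icc 0 1) {Φ : ℤ → ℝ}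
    (hext1 : Lap Φ 0 = 0) (hext2 : Lap2 Φ 0 = 0) :
    1 / 2 * strangScheme z Φ 0 ^ 2 - 1 / 2 * Φ 0 ^ 2 + strangFlux z Φ (-1) ≤ 0 := by
  obtain ⟨hz0, hz1⟩ := hz
  have hΦ1 : Φ 1 = 2 * Φ 0 - Φ (-1) := by
    norm_num [Lap] at hext1
    linarith
  have hΦ2 : Φ 2 = 2 * Φ 0 - Φ (-2) := by
    norm_num [Lap2] at hext2
    linarith
  have hsos : 1 / 2 * strangScheme z Φ 0 ^ 2 - 1 / 2 * Φ 0 ^ 2 + strangFlux z Φ (-1)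
      = -z * ((Φ 0 - z * Dd Φ 0 / 2 - z * (1 - z ^ 2) * Lap Φ (-1) / 24) ^ 2
          + (Dd Φ 0 + z ^ 2 * (1 - z ^ 2) * Lap Φ (-1) / 8) ^ 2 / 6 + z ^ 2 * Dd Φ 0 ^ 2 / 12
          + z * (1 - z ^ 2) * (64 + 6 * z - 16 * z ^ 2 - 9 * z ^ 3 + 3 * z ^ 5) / 1152
            * Lap Φ (-1) ^ 2) := by
    simp only [strangScheme, A5, D0, Lap, D0Lap, Lap2, Dd, strangFlux, strangFluxForm]
    norm_num [hΦ1, hΦ2]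
    ring
  have hs : 0 ≤ 1 - z ^ 2 := by nlinarith
  have hp : 0 ≤ 64 + 6 * z - 16 * z ^ 2 - 9 * z ^ 3 + 3 * z ^ 5 := by
    nlinarith [pow_le_one₀ (n := 2) hz0 hz1, pow_le_one₀ (n := 3) hz0 hz1, pow_nonneg hz0 5]
  rw [hsos]
  exact mul_nonpos_of_nonpos_of_nonneg (neg_nonpos.2 hz0) (by positivity)

/-- Semi-boundedness of the fourth order Strang scheme under the type-2 second
order extrapolation conditions `(ΔΦ)₀ = (Δ²Φ)₀ = 0`. -/
theorem strang_scheme_type2_extrapolation (z : ℝ) (hz : z ∈ Set.Ioo (0 : ℝ) 1)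
    (Φ : ℤ → ℝ) (hΦ : Summable (fun j : {j : ℤ // j ≤ 0} => (Φ j.1) ^ 2))
    (hext1 : Lap Φ 0 = 0) (hext2 : Lap2 Φ 0 = 0) :
    (∑' j : {j : ℤ // j ≤ -1},
        (A5 z (z * (1 - z ^ 2) / 6) (-(z ^ 2 * (1 - z ^ 2)) / 24) Φ j.1) ^ 2)
        + 1 / 2 * (A5 z (z * (1 - z ^ 2) / 6) (-(z ^ 2 * (1 - z ^ 2)) / 24) Φ 0) ^ 2
      ≤ (∑' j : {j : ℤ // j ≤ -1}, (Φ j.1) ^ 2) + 1 / 2 * (Φ 0) ^ 2 := by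
  have hz' : z ∈ Set.Icc 0 1 := Set.Ioo_subset_Icc_self hz
  have hsum : Summable fun j : {j : ℤ // j ≤ -1} => Φ j ^ 2 :=
    (hΦ.comp_injective (Subtype.impEmbedding (· ≤ -1) (· ≤ 0) fun _ hj => by omega).injective :)
  have hinterior := tsum_sq_strangScheme_le (pow_le_one₀ hz'.1 hz'.2) hsum
  have hboundary := strangScheme_boundary_energy_nonpos hz' hext1 hext2
  linarith
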